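/- arXiv:2102.04905 — 2 statements merged into one kernel-verified Lean document; each statement's English description precedes it below -/
import Mathlib

section
/- Let λ0, λ1 > 0, γ0 > γ1, t > 0 and γ1·t < x < γ0·t. Then for every natural number n ≥ 1, ∫_0^{ξ0(t,x)} λ0·e^{−λ0·τ} · λ0·λ1·ξ1(t−τ, x−γ0·τ) · z(t−τ, x−γ0·τ)^{n−1}/((n−1)!·n!) · θ(t−τ, x−γ0·τ) dτ = λ0 · z(t,x)^n/(n!)² · θ(t,x). (This verifies that the explicit even-switch telegraph density p_1(t,x;2n) produces the odd-switch density p_0(t,x;2n+1) = λ0·z(t,x)^n/(n!)²·θ(t,x) under conditioning on the first velocity switch from state 0.) -/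
/-!
Along the path that switches from state 0 at time `τ`, the point `(t - τ, x - γ₀ τ)` keeps the
coordinate `ξ₁`, has `ξ₀` lowered by `τ`, and its weight `θ` gains exactly the factor `e^{λ₀ τ}`
that cancels the density of the first switch. The integrand therefore collapses to a constant
times `(ξ₀ - τ)^(n-1)`, whose integral over `[0, ξ₀]` is `ξ₀^n / n`; this turns
`(n-1)! n!` into `(n!)²`.
-/

open Real Filter MeasureTheory

/-- `ξ₀(t,x) = (x − γ₁ t)/(γ₀ − γ₁)`. -/
noncomputable def xi0 (g0 g1 t x : ℝ) : ℝ := (x - g1 * t) / (g0 - g1)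

/-- `ξ₁(t,x) = (γ₀ t − x)/(γ₀ − γ₁)`. -/
noncomputable def xi1 (g0 g1 t x : ℝ) : ℝ := (g0 * t - x) / (g0 - g1)

/-- `z(t,x) = λ₀ λ₁ ξ₀(t,x) ξ₁(t,x)`. -/
noncomputable def zf (l0 l1 g0 g1 t x : ℝ) : ℝ := l0 * l1 * xi0 g0 g1 t x * xi1 g0 g1 t x

/-- `θ(t,x) = exp(−λ₀ ξ₀(t,x) − λ₁ ξ₁(t,x))/(γ₀ − γ₁)`. -/
noncomputable def thetaf (l0 l1 g0 g1 t x : ℝ) : ℝ :=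
  Real.exp (-(l0 * xi0 g0 g1 t x) - l1 * xi1 g0 g1 t x) / (g0 - g1)

section Shift

variable {l0 l1 g0 g1 : ℝ} (t x τ : ℝ)

theorem xi0_shift (hg : g0 ≠ g1) :
    xi0 g0 g1 (t - τ) (x - g0 * τ) = xi0 g0 g1 t x - τ := by
  have : g0 - g1 ≠ 0 := sub_ne_zero.mpr hg
  simp only [xi0]
  field_simp
  ring

theorem xi1_shift : xi1 g0 g1 (t - τ) (x - g0 * τ) = xi1 g0 g1 t x := by
  simp only [xi1]
  ring_nf

theorem zf_shift (hg : g0 ≠ g1) :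
    zf l0 l1 g0 g1 (t - τ) (x - g0 * τ) = l0 * l1 * (xi0 g0 g1 t x - τ) * xi1 g0 g1 t x := by
  rw [zf, xi0_shift t x τ hg, xi1_shift]

theorem thetaf_shift (hg : g0 ≠ g1) :
    thetaf l0 l1 g0 g1 (t - τ) (x - g0 * τ) = exp (l0 * τ) * thetaf l0 l1 g0 g1 t x := by
  rw [thetaf, thetaf, xi0_shift t x τ hg, xi1_shift, mul_div_assoc', ← exp_add]
  ring_nf

theorem first_switch_integrand_eq (hg : g0 ≠ g1) (m : ℕ) :
    l0 * exp (-(l0 * τ)) *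
        (l0 * l1 * xi1 g0 g1 (t - τ) (x - g0 * τ) *
          (zf l0 l1 g0 g1 (t - τ) (x - g0 * τ)) ^ m
          / ((m.factorial : ℝ) * ((m + 1).factorial : ℝ))) *
        thetaf l0 l1 g0 g1 (t - τ) (x - g0 * τ)
      = l0 * (l0 * l1 * xi1 g0 g1 t x) ^ (m + 1) * thetaf l0 l1 g0 g1 t x
          / ((m.factorial : ℝ) * ((m + 1).factorial : ℝ)) * (xi0 g0 g1 t x - τ) ^ m := by
  have hexp : exp (-(l0 * τ)) * exp (l0 * τ) = 1 := by rw [← exp_add, neg_add_cancel, exp_zero]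
  rw [xi1_shift, zf_shift t x τ hg, thetaf_shift t x τ hg, mul_right_comm _ (_ - τ), mul_pow]
  linear_combination (l0 * (l0 * l1 * xi1 g0 g1 t x) ^ (m + 1) * thetaf l0 l1 g0 g1 t x
    / ((m.factorial : ℝ) * ((m + 1).factorial : ℝ)) * (xi0 g0 g1 t x - τ) ^ m) * hexp

end Shift

theorem integral_sub_pow (a : ℝ) (m : ℕ) :
    ∫ τ in (0 : ℝ)..a, (a - τ) ^ m = a ^ (m + 1) / (m + 1) := by
  rw [intervalIntegral.integral_comp_sub_left (fun u => u ^ m), sub_self, sub_zero, integral_pow,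
    zero_pow m.succ_ne_zero, sub_zero]

theorem telegraph_density_first_switch_odd_general (l0 l1 g0 g1 t x : ℝ)
    (hg : g1 < g0) (n : ℕ) (hn : 1 ≤ n) :
    ∫ τ in (0 : ℝ)..(xi0 g0 g1 t x),
        l0 * Real.exp (-(l0 * τ)) *
          (l0 * l1 * xi1 g0 g1 (t - τ) (x - g0 * τ) *
            (zf l0 l1 g0 g1 (t - τ) (x - g0 * τ)) ^ (n - 1)
            / ((Nat.factorial (n - 1) : ℝ) * (Nat.factorial n : ℝ))) *
          thetaf l0 l1 g0 g1 (t - τ) (x - g0 * τ)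
      = l0 * (zf l0 l1 g0 g1 t x) ^ n / (Nat.factorial n : ℝ) ^ 2 *
          thetaf l0 l1 g0 g1 t x := by
  obtain ⟨m, rfl⟩ : ∃ m, n = m + 1 := ⟨n - 1, (Nat.succ_pred_eq_of_pos hn).symm⟩
  simp only [Nat.add_sub_cancel, first_switch_integrand_eq t x _ hg.ne',
    intervalIntegral.integral_const_mul, integral_sub_pow]
  have hfact : ((m + 1).factorial : ℝ) = (m + 1) * m.factorial := by
    rw [Nat.factorial_succ]; push_cast; ring
  have hm : (m.factorial : ℝ) ≠ 0 := Nat.cast_ne_zero.mpr m.factorial_ne_zero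
  rw [hfact, zf]
  field_simp
  ring

/-- conditioning on the first velocity switch from state 0 turns the even-switch
density `p₁(t,x;2n)` into the odd-switch density `p₀(t,x;2n+1)`. -/
theorem telegraph_density_first_switch_odd (l0 l1 g0 g1 t x : ℝ)
    (hl0 : 0 < l0) (hl1 : 0 < l1) (hg : g1 < g0) (ht : 0 < t)
    (hx1 : g1 * t < x) (hx2 : x < g0 * t) (n : ℕ) (hn : 1 ≤ n) :
    ∫ τ in (0 : ℝ)..(xi0 g0 g1 t x),
        l0 * Real.exp (-(l0 * τ)) *
          (l0 * l1 * xi1 g0 g1 (t - τ) (x - g0 * τ) *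
            (zf l0 l1 g0 g1 (t - τ) (x - g0 * τ)) ^ (n - 1)
            / ((Nat.factorial (n - 1) : ℝ) * (Nat.factorial n : ℝ))) *
          thetaf l0 l1 g0 g1 (t - τ) (x - g0 * τ)
      = l0 * (zf l0 l1 g0 g1 t x) ^ n / (Nat.factorial n : ℝ) ^ 2 *
          thetaf l0 l1 g0 g1 t x :=
  telegraph_density_first_switch_odd_general l0 l1 g0 g1 t x hg n hn
end

section
/- Let λ0, λ1 > 0, γ0 > 0 > γ1, t > 0 and 0 < x < γ0·t. For every natural number n ≥ 0, ∫_0^{x/γ0} λ1·e^{−λ0·s} · (λ0/(γ0·ξ0(t−s, x−γ0·s))) · z(t−s, x−γ0·s)^n/(n!)² · θ(t−s, x−γ0·s) · ((x − γ0·s) − (γ1/(n+1))·ξ1(t−s, x−γ0·s)) ds = (λ0·λ1·x/γ0) · z(t,x)^n/(n!·(n+1)!) · θ(t,x). (This verifies the first equation of the coupled system for positive telegraphic meanders: the explicit meander density g⁺(t,x;2n+1) = (λ0/(γ0·ξ0))·z^n/(n!)²·θ·(x − γ1·ξ1/(n+1)) produces g⁺(t,x;2n+2) = (λ0·λ1·x/γ0)·z^n/(n!(n+1)!)·θ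 by conditioning on the last velocity change.) -/
open Real Filter MeasureTheory

/-!
Along the line `s ↦ (t - s, x - γ₀ s)`, traced back through the final run at velocity `γ₀`,
`ξ₁` is constant and `ξ₀` drops at unit speed, while `θ` gains exactly the factor `e^{λ₀ s}`
that cancels the holding-time density. With `u = x/γ₀` and `γ₀ (ξ₀ - u) = -γ₁ ξ₁`, the integrand
becomes a constant times `(ξ₀ - s)^(n-1) ((u - s) + (ξ₀ - u)/(n+1))`, the derivative of
`(ξ₀ - s)^n (s - u)/(n+1)`; this vanishes at `s = u`, and its value at `s = 0` gives the
right-hand side.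
-/

section CharacteristicLine

variable {l0 l1 g0 g1 : ℝ}

lemma xi0_along_line (hd : g0 - g1 ≠ 0) (t x s : ℝ) :
    xi0 g0 g1 (t - s) (x - g0 * s) = xi0 g0 g1 t x - s := by
  unfold xi0
  field_simp
  ring

lemma xi1_along_line (t x s : ℝ) : xi1 g0 g1 (t - s) (x - g0 * s) = xi1 g0 g1 t x := by
  unfold xi1
  ring_nf

lemma thetaf_along_line (hd : g0 - g1 ≠ 0) (t x s : ℝ) :
    thetaf l0 l1 g0 g1 (t - s) (x - g0 * s) = Real.exp (l0 * s) * thetaf l0 l1 g0 g1 t x := by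
  rw [thetaf, thetaf, xi0_along_line hd, xi1_along_line, mul_div_assoc', ← Real.exp_add]
  ring_nf

lemma mul_xi0_sub (hd : g0 - g1 ≠ 0) (t x : ℝ) :
    g0 * xi0 g0 g1 t x - x = -g1 * xi1 g0 g1 t x := by
  unfold xi0 xi1
  field_simp
  ring

lemma div_lt_xi0 (hg0 : 0 < g0) (hg1 : g1 < 0) {t x : ℝ} (hx : x < g0 * t) :
    x / g0 < xi0 g0 g1 t x := by
  have hslope := mul_xi0_sub (g0 := g0) (g1 := g1) (by linarith) t x
  have hxi1 : 0 < xi1 g0 g1 t x := div_pos (by linarith) (by linarith)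
  rw [div_lt_iff₀ hg0]
  linarith [mul_neg_of_neg_of_pos hg1 hxi1]

end CharacteristicLine

-- `(A - s) ^ n / (A - s)` is `(A - s) ^ (n - 1)` without the truncated subtraction at `n = 0`.
lemma hasDerivAt_sub_pow_mul_sub (A u s : ℝ) (n : ℕ) (hs : A - s ≠ 0) :
    HasDerivAt (fun y => (A - y) ^ n * (y - u) / (n + 1))
      ((A - s) ^ n / (A - s) * ((u - s) + (A - u) / (n + 1))) s := by
  have hpow : HasDerivAt (fun y => (A - y) ^ n) (n * (A - s) ^ (n - 1) * -1) s :=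
    ((hasDerivAt_id s).const_sub A).pow n
  have hlin : HasDerivAt (fun y => y - u) 1 s := (hasDerivAt_id s).sub_const u
  refine ((hpow.mul hlin).div_const ((n : ℝ) + 1)).congr_deriv ?_
  rcases n with _ | m
  · field_simp
    ring
  · rw [Nat.add_sub_cancel, pow_succ]
    push_cast
    field_simp
    ring

lemma integral_sub_pow_div_mul {A u : ℝ} (hu : 0 ≤ u) (huA : u < A) (n : ℕ) :
    ∫ s in (0 : ℝ)..u, (A - s) ^ n / (A - s) * ((u - s) + (A - u) / (n + 1))
      = A ^ n * u / (n + 1) := by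
  have hpos : ∀ s ∈ Set.uIcc 0 u, 0 < A - s := fun s hs => by
    rw [Set.uIcc_of_le hu] at hs
    linarith [hs.2]
  rw [intervalIntegral.integral_eq_sub_of_hasDerivAt
    (fun s hs => hasDerivAt_sub_pow_mul_sub A u s n (hpos s hs).ne')]
  · simp only [sub_self, mul_zero, zero_div, sub_zero]
    ring
  · refine ContinuousOn.intervalIntegrable (ContinuousOn.mul ?_ (by fun_prop))
    exact ContinuousOn.div (by fun_prop) (by fun_prop) fun s hs => (hpos s hs).ne'

theorem meander_last_switch_even_general (l0 l1 g0 g1 t x : ℝ)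
    (hg0 : 0 < g0) (hg1 : g1 < 0)
    (hx1 : 0 < x) (hx2 : x < g0 * t) (n : ℕ) :
    ∫ s in (0 : ℝ)..(x / g0),
        l1 * Real.exp (-(l0 * s)) *
          (l0 / (g0 * xi0 g0 g1 (t - s) (x - g0 * s))) *
          (zf l0 l1 g0 g1 (t - s) (x - g0 * s)) ^ n / (Nat.factorial n : ℝ) ^ 2 *
          thetaf l0 l1 g0 g1 (t - s) (x - g0 * s) *
          ((x - g0 * s) - (g1 / ((n : ℝ) + 1)) * xi1 g0 g1 (t - s) (x - g0 * s))
      = (l0 * l1 * x / g0) * (zf l0 l1 g0 g1 t x) ^ n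
          / ((Nat.factorial n : ℝ) * (Nat.factorial (n + 1) : ℝ)) * thetaf l0 l1 g0 g1 t x := by
  have hd : g0 - g1 ≠ 0 := by linarith
  have hslope := mul_xi0_sub hd t x
  have huA := div_lt_xi0 hg0 hg1 hx2
  simp only [zf, thetaf_along_line hd, xi0_along_line hd, xi1_along_line]
  set A := xi0 g0 g1 t x
  set B := xi1 g0 g1 t x
  set θ := thetaf l0 l1 g0 g1 t x
  calc _ = ∫ s in (0 : ℝ)..(x / g0), l0 * l1 * (l0 * l1 * B) ^ n / (Nat.factorial n : ℝ) ^ 2 * θ *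
          ((A - s) ^ n / (A - s) * ((x / g0 - s) + (A - x / g0) / (n + 1))) := by
        refine intervalIntegral.integral_congr fun s hs => ?_
        rw [Set.uIcc_of_le (div_pos hx1 hg0).le] at hs
        have hAs : A - s ≠ 0 := by linarith [hs.2]
        have hlast : x - g0 * s - g1 / (n + 1) * B
            = g0 * ((x / g0 - s) + (A - x / g0) / (n + 1)) := by
          field_simp
          linear_combination -hslope
        rw [hlast, Real.exp_neg]
        simp only [mul_pow]
        field_simp
    _ = _ := by
        rw [intervalIntegral.integral_const_mul, integral_sub_pow_div_mul (div_pos hx1 hg0).le huA,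
          Nat.factorial_succ]
        push_cast
        field_simp
        ring

/-- first equation of the coupled system for positive telegraphic meanders —
the meander density `g⁺(t,x;2n+1)` produces `g⁺(t,x;2n+2)` by conditioning on the last
velocity change. -/
theorem meander_last_switch_even (l0 l1 g0 g1 t x : ℝ)
    (hl0 : 0 < l0) (hl1 : 0 < l1) (hg0 : 0 < g0) (hg1 : g1 < 0)
    (ht : 0 < t) (hx1 : 0 < x) (hx2 : x < g0 * t) (n : ℕ) :
    ∫ s in (0 : ℝ)..(x / g0),
        l1 * Real.exp (-(l0 * s)) *
          (l0 / (g0 * xi0 g0 g1 (t - s) (x - g0 * s))) *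
          (zf l0 l1 g0 g1 (t - s) (x - g0 * s)) ^ n / (Nat.factorial n : ℝ) ^ 2 *
          thetaf l0 l1 g0 g1 (t - s) (x - g0 * s) *
          ((x - g0 * s) - (g1 / ((n : ℝ) + 1)) * xi1 g0 g1 (t - s) (x - g0 * s))
      = (l0 * l1 * x / g0) * (zf l0 l1 g0 g1 t x) ^ n
          / ((Nat.factorial n : ℝ) * (Nat.factorial (n + 1) : ℝ)) * thetaf l0 l1 g0 g1 t x :=
  meander_last_switch_even_general l0 l1 g0 g1 t x hg0 hg1 hx1 hx2 n
end
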